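/- Let f : ℝ → ℝ be convex, let C be an n×n Hermitian complex matrix, and let v ∈ ℂⁿ be a unit vector. Then ⟨v, f(C)v⟩ ≥ f(⟨v, Cv⟩), where both inner products are real numbers since C and f(C) are Hermitian. -/

import Mathlib

open Matrix

/-- `f` applied to a Hermitian matrix through a spectral decomposition
(continuous functional calculus): `f(C) = U · diag(f(λᵢ)) · U*`. -/
noncomputable def IsHermitian.applyFun {n : ℕ} {C : Matrix (Fin n) (Fin n) ℂ}
    (hC : C.IsHermitian) (f : ℝ → ℝ) : Matrix (Fin n) (Fin n) ℂ :=
  (hC.eigenvectorUnitary : Matrix (Fin n) (Fin n) ℂ) *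
    Matrix.diagonal (fun i => (f (hC.eigenvalues i) : ℂ)) *
    star (hC.eigenvectorUnitary : Matrix (Fin n) (Fin n) ℂ)

/-! Writing `C = U diag(λ) U*` and `w = U* v`, both `⟨v, C v⟩` and `⟨v, f(C) v⟩` are averages of
`λᵢ` and `f(λᵢ)` with the same weights `|wᵢ|²`, which sum to `‖v‖² = 1` because `U` is unitary.
The inequality is then Jensen's inequality for these weights. -/

section

variable {m : Type*} [Fintype m] [DecidableEq m]

theorem star_dotProduct_conj_diagonal_mulVec (U : Matrix m m ℂ) (d : m → ℝ) (v : m → ℂ) :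
    star v ⬝ᵥ ((U * diagonal (fun i => (d i : ℂ)) * star U) *ᵥ v) =
      ((∑ i, Complex.normSq ((star U *ᵥ v) i) * d i : ℝ) : ℂ) := by
  set w := star U *ᵥ v
  have hstar_w : star v ᵥ* U = star w := by
    rw [Matrix.star_mulVec, star_eq_conjTranspose, conjTranspose_conjTranspose]
  rw [← mulVec_mulVec, ← mulVec_mulVec, dotProduct_mulVec, hstar_w]
  simp only [dotProduct, mulVec_diagonal]
  push_cast
  refine Finset.sum_congr rfl fun i _ => ?_
  rw [Pi.star_apply, Complex.star_def, ← Complex.mul_conj]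
  ring

namespace Matrix.IsHermitian

variable {C : Matrix m m ℂ}

noncomputable def spectralWeights (hC : C.IsHermitian) (v : m → ℂ) : m → ℝ :=
  fun i => Complex.normSq ((star (hC.eigenvectorUnitary : Matrix m m ℂ) *ᵥ v) i)

theorem spectralWeights_nonneg (hC : C.IsHermitian) (v : m → ℂ) (i : m) :
    0 ≤ hC.spectralWeights v i :=
  Complex.normSq_nonneg _

theorem sum_spectralWeights (hC : C.IsHermitian) (v : m → ℂ) :
    ∑ i, hC.spectralWeights v i = (star v ⬝ᵥ v).re := by
  have h := star_dotProduct_conj_diagonal_mulVec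
    (hC.eigenvectorUnitary : Matrix m m ℂ) (fun _ => 1) v
  rw [Complex.ofReal_one, diagonal_one, Matrix.mul_one,
    (mem_unitaryGroup_iff).mp hC.eigenvectorUnitary.2, one_mulVec] at h
  simp_rw [h, mul_one, Complex.ofReal_re]
  rfl

theorem re_star_dotProduct_mulVec (hC : C.IsHermitian) (v : m → ℂ) :
    (star v ⬝ᵥ (C *ᵥ v)).re = ∑ i, hC.spectralWeights v i * hC.eigenvalues i := by
  conv_lhs => rw [hC.spectral_theorem, Unitary.conjStarAlgAut_apply]
  exact congrArg Complex.re (star_dotProduct_conj_diagonal_mulVec _ hC.eigenvalues v)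

end Matrix.IsHermitian

end

theorem IsHermitian.re_star_dotProduct_applyFun_mulVec {n : ℕ} {C : Matrix (Fin n) (Fin n) ℂ}
    (hC : C.IsHermitian) (f : ℝ → ℝ) (v : Fin n → ℂ) :
    (star v ⬝ᵥ (IsHermitian.applyFun hC f *ᵥ v)).re =
      ∑ i, hC.spectralWeights v i * f (hC.eigenvalues i) :=
  congrArg Complex.re (star_dotProduct_conj_diagonal_mulVec _ (f ∘ hC.eigenvalues) v)

/-- For convex `f`, a Hermitian matrix `C` and a unit vector `v`,
one has `⟨v, f(C) v⟩ ≥ f(⟨v, C v⟩)`. -/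
theorem inner_applyFun_ge {n : ℕ} (f : ℝ → ℝ) (hf : ConvexOn ℝ Set.univ f)
    (C : Matrix (Fin n) (Fin n) ℂ) (hC : C.IsHermitian)
    (v : Fin n → ℂ) (hv : star v ⬝ᵥ v = 1) :
    f ((star v ⬝ᵥ (C *ᵥ v)).re) ≤ (star v ⬝ᵥ ((IsHermitian.applyFun hC f) *ᵥ v)).re := by
  have hweights : ∑ i, hC.spectralWeights v i = 1 := by
    rw [hC.sum_spectralWeights, hv, Complex.one_re]
  rw [hC.re_star_dotProduct_mulVec, IsHermitian.re_star_dotProduct_applyFun_mulVec]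
  exact hf.map_sum_le (fun i _ => hC.spectralWeights_nonneg v i) hweights
    (fun i _ => Set.mem_univ _)
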